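/- arXiv:1802.02808 — 3 statements merged into one kernel-verified Lean document; each statement's English description precedes it below -/
import Mathlib

section
/- If a planar convex body K slides freely in a circle of radius r_M (i.e., for each boundary point x of K there is a vector p such that x lies on the circle of radius r_M centered at p and K is contained in the closed disc of radius r_M centered at p), then for any two points x, y in K and any r ≥ r_M, the intersection of all closed discs of radius r containing both x and y is contained in K. -/
/-!
If `z ∉ K`, separate `z` from `K` by a unit vector `u`. The heart of the matter is that `K` has a
supporting disc of radius `rM` with outer normal `u`, touching `K` at some `w`; the disc of
radius `r ≥ rM` tangent at `w` with the same normal contains it, so it contains `x` and `y`,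
while `z` lies beyond its supporting line.

Parametrise normals by angles. The angles of supporting `rM`-discs form a closed set, and it has
no gaps: at a support point for a direction inside a gap, the disc given by the sliding
hypothesis has its normal outside the gap, and the normal cone there contains the shorter arc
between the two, which reaches an end of the gap. By strict convexity and connectedness both ends
of the gap are then supported at one point `w`, and since `K ⊆ closedBall (w - R • u) R` is
linear in `u` once the square is expanded, the discs at `w` can be interpolated across the gap.
-/

open Metric Set Real Module
open scoped RealInnerProductSpace EuclideanSpace

lemma IsClosed.Icc_subset_of_forall_Ioo_inter_nonempty {α : Type*}
    [ConditionallyCompleteLinearOrder α] [TopologicalSpace α] [OrderTopology α] {S : Set α}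
    {a b : α} (hS : IsClosed S) (ha : a ∈ S) (hb : b ∈ S)
    (hgap : ∀ x ∈ S, ∀ y ∈ S, a ≤ x → x < y → y ≤ b → (Ioo x y ∩ S).Nonempty) :
    Icc a b ⊆ S := by
  intro t ⟨hat, htb⟩
  by_contra ht
  have hbdd : BddAbove (S ∩ Icc a t) := ⟨t, fun _ h => h.2.2⟩
  have hbdd' : BddBelow (S ∩ Icc t b) := ⟨t, fun _ h => h.2.1⟩
  have hx : sSup (S ∩ Icc a t) ∈ S ∩ Icc a t :=
    (hS.inter isClosed_Icc).csSup_mem ⟨a, ha, le_rfl, hat⟩ hbdd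
  have hy : sInf (S ∩ Icc t b) ∈ S ∩ Icc t b :=
    (hS.inter isClosed_Icc).csInf_mem ⟨b, hb, htb, le_rfl⟩ hbdd'
  have hxt : sSup (S ∩ Icc a t) < t := lt_of_le_of_ne hx.2.2 fun h => ht (h ▸ hx.1)
  have hty : t < sInf (S ∩ Icc t b) := lt_of_le_of_ne hy.2.1 fun h => ht (h ▸ hy.1)
  obtain ⟨s, ⟨hxs, hsy⟩, hs⟩ :=
    hgap _ hx.1 _ hy.1 hx.2.1 (hxt.trans hty) hy.2.2
  rcases le_total s t with hst | hts
  · exact (le_csSup hbdd ⟨hs, hx.2.1.trans hxs.le, hst⟩).not_gt hxs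
  · exact (csInf_le hbdd' ⟨hs, hts, hsy.le.trans hy.2.2⟩).not_gt hsy

section InnerProductSpace

variable {V : Type*} [NormedAddCommGroup V] [InnerProductSpace ℝ V]
  {K : Set V} {R : ℝ} {u w : V}

lemma inner_sub_nonpos_of_mem_closedBall_sub_smul (hu : ‖u‖ = 1) {k : V}
    (hk : k ∈ closedBall (w - R • u) R) : ⟪k - w, u⟫ ≤ 0 := by
  have hcs := real_inner_le_norm (k - (w - R • u)) u
  rw [mem_closedBall, dist_eq_norm] at hk
  rw [show k - (w - R • u) = (k - w) + R • u by abel] at hk hcs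
  rw [inner_add_left, real_inner_smul_left, real_inner_self_eq_norm_sq, hu] at hcs
  linarith

lemma isMaxOn_inner_of_subset_closedBall (hu : ‖u‖ = 1) (h : K ⊆ closedBall (w - R • u) R) :
    IsMaxOn (⟪·, u⟫) K w := fun k hk => by
  have := inner_sub_nonpos_of_mem_closedBall_sub_smul hu (h hk)
  rw [inner_sub_left] at this
  exact sub_nonpos.mp this

lemma mem_closedBall_sub_smul_iff (hR : 0 ≤ R) (hu : ‖u‖ = 1) {k : V} :
    k ∈ closedBall (w - R • u) R ↔ ‖k - w‖ ^ 2 + 2 * R * ⟪k - w, u⟫ ≤ 0 := by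
  rw [mem_closedBall, dist_eq_norm, show k - (w - R • u) = (k - w) + R • u by abel,
    ← sq_le_sq₀ (norm_nonneg _) hR, norm_add_sq_real, real_inner_smul_right, norm_smul, hu,
    Real.norm_of_nonneg hR]
  constructor <;> intro h <;> nlinarith

lemma closedBall_sub_smul_subset (hu : ‖u‖ = 1) {r : ℝ} (hRr : R ≤ r) :
    closedBall (w - R • u) R ⊆ closedBall (w - r • u) r := by
  refine closedBall_subset_closedBall' ?_
  rw [dist_eq_norm, show w - R • u - (w - r • u) = (r - R) • u by module, norm_smul, hu,
    Real.norm_of_nonneg (sub_nonneg.mpr hRr)]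
  linarith

lemma notMem_closedBall_sub_smul_of_inner_lt (hu : ‖u‖ = 1) {z : V} (h : ⟪w, u⟫ < ⟪z, u⟫) :
    z ∉ closedBall (w - R • u) R := by
  intro hz
  have := inner_sub_nonpos_of_mem_closedBall_sub_smul hu hz
  rw [inner_sub_left] at this
  linarith

lemma subset_closedBall_of_eq_add_smul {a b c : V} {s t : ℝ} (hR : 0 ≤ R) (ha : ‖a‖ = 1)
    (hb : ‖b‖ = 1) (hc : ‖c‖ = 1) (hs : 0 ≤ s) (ht : 0 ≤ t) (hbac : b = s • a + t • c)
    (hKa : K ⊆ closedBall (w - R • a) R) (hKc : K ⊆ closedBall (w - R • c) R) :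
    K ⊆ closedBall (w - R • b) R := by
  have hst : 1 ≤ s + t := by
    calc 1 = ‖s • a + t • c‖ := by rw [← hbac, hb]
      _ ≤ ‖s • a‖ + ‖t • c‖ := norm_add_le _ _
      _ = s + t := by rw [norm_smul, norm_smul, ha, hc, Real.norm_of_nonneg hs,
          Real.norm_of_nonneg ht, mul_one, mul_one]
  intro k hk
  have hka := (mem_closedBall_sub_smul_iff hR ha).mp (hKa hk)
  have hkc := (mem_closedBall_sub_smul_iff hR hc).mp (hKc hk)
  rw [mem_closedBall_sub_smul_iff hR hb, hbac, inner_add_right, real_inner_smul_right,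
    real_inner_smul_right]
  nlinarith [sq_nonneg ‖k - w‖]

lemma IsMaxOn.inner_add_smul {a c : V} {s t : ℝ} (hs : 0 ≤ s) (ht : 0 ≤ t)
    (ha : IsMaxOn (⟪·, a⟫) K w) (hc : IsMaxOn (⟪·, c⟫) K w) :
    IsMaxOn (⟪·, s • a + t • c⟫) K w := fun k hk => by
  have hka : ⟪k, a⟫ ≤ ⟪w, a⟫ := ha hk
  have hkc : ⟪k, c⟫ ≤ ⟪w, c⟫ := hc hk
  simp only [mem_ofPred_eq, inner_add_right, real_inner_smul_right]
  nlinarith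

lemma IsMaxOn.notMem_interior_of_inner (hu : u ≠ 0) (h : IsMaxOn (⟪·, u⟫) K w) :
    w ∉ interior K := by
  intro hw
  obtain ⟨ε, hε, hball⟩ := Metric.isOpen_iff.mp isOpen_interior w hw
  set δ := ε / 2 / ‖u‖
  have hδ : 0 < δ := by positivity
  have hmem : w + δ • u ∈ K := by
    refine interior_subset (hball ?_)
    rw [mem_ball, dist_eq_norm, add_sub_cancel_left, norm_smul, Real.norm_of_nonneg hδ.le,
      div_mul_cancel₀ _ (norm_ne_zero_iff.mpr hu)]
    linarith
  have hle : ⟪w + δ • u, u⟫ ≤ ⟪w, u⟫ := h hmem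
  rw [inner_add_left, real_inner_smul_left, real_inner_self_eq_norm_sq] at hle
  nlinarith [mul_pos hδ (pow_pos (norm_pos_iff.mpr hu) 2)]

lemma IsMaxOn.mem_frontier_of_inner (hu : u ≠ 0) (hw : w ∈ K) (h : IsMaxOn (⟪·, u⟫) K w) :
    w ∈ frontier K :=
  ⟨subset_closure hw, h.notMem_interior_of_inner hu⟩

lemma interior_eq_empty_of_isMaxOn_inner_neg (hu : u ≠ 0) (h : IsMaxOn (⟪·, u⟫) K w)
    (hneg : IsMaxOn (⟪·, -u⟫) K w) : interior K = ∅ := by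
  refine eq_empty_of_forall_notMem fun k hk => ?_
  refine IsMaxOn.notMem_interior_of_inner hu (fun k' hk' => ?_) hk
  have h₁ : ⟪k', u⟫ ≤ ⟪w, u⟫ := h hk'
  have h₂ : ⟪k, -u⟫ ≤ ⟪w, -u⟫ := hneg (interior_subset hk)
  simp only [inner_neg_right, neg_le_neg_iff] at h₂
  exact h₁.trans h₂

lemma IsCompact.exists_mem_frontier_isMaxOn_inner (hK : IsCompact K) (hne : K.Nonempty)
    (hu : u ≠ 0) : ∃ w ∈ frontier K, IsMaxOn (⟪·, u⟫) K w := by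
  obtain ⟨w, hwK, hmax⟩ := hK.exists_isMaxOn hne
    (continuous_id.inner continuous_const : Continuous (⟪·, u⟫)).continuousOn
  exact ⟨w, hmax.mem_frontier_of_inner hu hwK, hmax⟩

lemma StrictConvex.eq_of_isMaxOn_inner (hK : StrictConvex ℝ K) (hu : u ≠ 0) {w' : V}
    (hw : w ∈ K) (hw' : w' ∈ K) (h : IsMaxOn (⟪·, u⟫) K w) (h' : IsMaxOn (⟪·, u⟫) K w') :
    w = w' := by
  by_contra hne
  have hmid := hK hw hw' hne (by norm_num : (0 : ℝ) < 1 / 2)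
    (by norm_num : (0 : ℝ) < 1 / 2) (by norm_num)
  refine IsMaxOn.notMem_interior_of_inner hu (fun k hk => ?_) hmid
  have h₁ : ⟪k, u⟫ ≤ ⟪w, u⟫ := h hk
  have h₂ : ⟪w, u⟫ ≤ ⟪w', u⟫ := h' hw
  have h₃ : ⟪w', u⟫ ≤ ⟪w, u⟫ := h hw'
  simp only [mem_ofPred_eq, inner_add_left, real_inner_smul_left]
  linarith

lemma StrictConvex.eq_of_forall_isMaxOn_inner_or (hK : StrictConvex ℝ K) {g : ℝ → V}
    (hg : Continuous g) (hg0 : ∀ θ, g θ ≠ 0) {α β : ℝ} (hαβ : α ≤ β) {w₁ w₂ : V}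
    (hw₁ : w₁ ∈ K) (hw₂ : w₂ ∈ K)
    (h₁ : IsMaxOn (⟪·, g α⟫) K w₁) (h₂ : IsMaxOn (⟪·, g β⟫) K w₂)
    (h : ∀ θ ∈ Icc α β, IsMaxOn (⟪·, g θ⟫) K w₁ ∨ IsMaxOn (⟪·, g θ⟫) K w₂) : w₁ = w₂ := by
  have hclosed : ∀ w, IsClosed {θ | IsMaxOn (⟪·, g θ⟫) K w} := fun w => by
    simp only [isMaxOn_iff, ofPred_forall]
    exact isClosed_biInter fun k _ => isClosed_le (by fun_prop) (by fun_prop)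
  obtain ⟨θ, -, hθ₁, hθ₂⟩ := isPreconnected_closed_iff.mp isPreconnected_Icc _ _ (hclosed w₁)
    (hclosed w₂) h ⟨α, left_mem_Icc.mpr hαβ, h₁⟩ ⟨β, right_mem_Icc.mpr hαβ, h₂⟩
  exact hK.eq_of_isMaxOn_inner (hg0 θ) hw₁ hw₂ hθ₁ hθ₂

lemma exists_norm_eq_one_subset_closedBall {p : V} (hR : R ≠ 0) (hw : dist w p = R)
    (hK : K ⊆ closedBall p R) : ∃ u, ‖u‖ = 1 ∧ K ⊆ closedBall (w - R • u) R := by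
  refine ⟨R⁻¹ • (w - p), ?_, ?_⟩
  · rw [norm_smul, ← dist_eq_norm, hw, norm_inv, Real.norm_eq_abs,
      abs_of_nonneg (hw ▸ dist_nonneg), inv_mul_cancel₀ hR]
  · rwa [smul_smul, mul_inv_cancel₀ hR, one_smul, sub_sub_cancel]

lemma Convex.strictConvex_of_frontier_subset_sphere (hK : Convex ℝ K)
    (hslide : ∀ x ∈ frontier K, ∃ p, dist x p = R ∧ K ⊆ closedBall p R) :
    StrictConvex ℝ K := by
  intro x hx y hy hxy a b ha hb hab
  by_contra hint
  obtain ⟨p, hdist, hsub⟩ := hslide _ ⟨subset_closure (hK hx hy ha.le hb.le hab), hint⟩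
  have hR : R ≠ 0 := by
    rintro rfl
    rw [closedBall_zero] at hsub
    exact hxy ((hsub hx).trans (hsub hy).symm)
  have hball := strictConvex_closedBall ℝ p R (hsub hx) (hsub hy) hxy ha hb hab
  rw [interior_closedBall p hR, mem_ball, hdist] at hball
  exact lt_irrefl R hball

lemma exists_norm_eq_one_inner_lt_of_notMem (hKc : IsClosed K) (hK : Convex ℝ K)
    (hne : K.Nonempty) [CompleteSpace V] {z : V} (hz : z ∉ K) :
    ∃ u, ‖u‖ = 1 ∧ ∀ k ∈ K, ⟪k, u⟫ < ⟪z, u⟫ := by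
  obtain ⟨v, hvK, hmin⟩ := exists_norm_eq_iInf_of_complete_convex hne hKc.isComplete hK z
  have hproj := (norm_eq_iInf_iff_real_inner_le_zero hK hvK).mp hmin
  have hzv : 0 < ‖z - v‖ := norm_pos_iff.mpr (sub_ne_zero.mpr fun h => hz (h ▸ hvK))
  refine ⟨‖z - v‖⁻¹ • (z - v), by rw [norm_smul, norm_inv, norm_norm, inv_mul_cancel₀ hzv.ne'],
    fun k hk => ?_⟩
  have hkv := hproj k hk
  have key : ⟪z, z - v⟫ - ⟪k, z - v⟫ = ⟪z - v, z - v⟫ - ⟪z - v, k - v⟫ := by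
    simp only [inner_sub_left, inner_sub_right, real_inner_comm]; ring
  have hzz : 0 < ⟪z - v, z - v⟫ := by rw [real_inner_self_eq_norm_sq]; positivity
  rw [real_inner_smul_right, real_inner_smul_right]
  exact mul_lt_mul_of_pos_left (by linarith) (inv_pos.mpr hzv)

lemma IsCompact.isClosed_setOf_exists_subset_closedBall (hK : IsCompact K) (R : ℝ) :
    IsClosed {u : V | ∃ w ∈ K, K ⊆ closedBall (w - R • u) R} := by
  have : CompactSpace K := isCompact_iff_compactSpace.mp hK
  have hclosed : IsClosed {q : K × V | K ⊆ closedBall ((q.1 : V) - R • q.2) R} := by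
    simp only [subset_def, mem_closedBall, ofPred_forall]
    exact isClosed_biInter fun k _ => isClosed_le (by fun_prop) continuous_const
  convert isClosedMap_snd_of_compactSpace _ hclosed using 1
  ext u
  simp

end InnerProductSpace

namespace Orientation

variable {V : Type*} [NormedAddCommGroup V] [InnerProductSpace ℝ V] [Fact (finrank ℝ V = 2)]
  (o : Orientation ℝ V (Fin 2))

lemma rotation_coe_apply (θ : ℝ) (x : V) :
    o.rotation θ x = Real.cos θ • x + Real.sin θ • o.rightAngleRotation x := by
  rw [rotation_apply, Real.Angle.cos_coe, Real.Angle.sin_coe]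

lemma continuous_rotation_coe_apply (x : V) : Continuous fun θ : ℝ => o.rotation θ x := by
  simp only [rotation_coe_apply]
  fun_prop

lemma rotation_coe_add_two_pi (θ : ℝ) (x : V) : o.rotation (θ + 2 * π : ℝ) x = o.rotation θ x := by
  simp

lemma rotation_coe_add_pi (θ : ℝ) (x : V) : o.rotation (θ + π : ℝ) x = -o.rotation θ x := by
  rw [rotation_coe_apply, rotation_coe_apply, Real.cos_add_pi, Real.sin_add_pi, neg_smul, neg_smul,
    neg_add]

lemma sin_sub_smul_rotation (a b c : ℝ) (x : V) :
    Real.sin (c - a) • o.rotation b x =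
      Real.sin (c - b) • o.rotation a x + Real.sin (b - a) • o.rotation c x := by
  simp only [rotation_coe_apply, Real.sin_sub, smul_add, smul_smul]
  rw [add_add_add_comm, ← add_smul, ← add_smul]
  congr 2 <;> ring

lemma exists_rotation_eq_add_smul {a b c : ℝ} (hab : a ≤ b) (hbc : b ≤ c) (hca : c - a < π)
    (x : V) :
    ∃ s t : ℝ, 0 ≤ s ∧ 0 ≤ t ∧ o.rotation b x = s • o.rotation a x + t • o.rotation c x := by
  rcases hab.eq_or_lt with rfl | hab
  · exact ⟨1, 0, zero_le_one, le_rfl, by simp⟩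
  have hsin : 0 < Real.sin (c - a) := sin_pos_of_pos_of_lt_pi (by linarith) hca
  refine ⟨Real.sin (c - b) / Real.sin (c - a), Real.sin (b - a) / Real.sin (c - a),
    div_nonneg (sin_nonneg_of_nonneg_of_le_pi (by linarith) (by linarith)) hsin.le,
    div_nonneg (sin_nonneg_of_nonneg_of_le_pi (by linarith) (by linarith)) hsin.le, ?_⟩
  rw [div_eq_inv_mul, div_eq_inv_mul, mul_smul, mul_smul, ← smul_add,
    ← o.sin_sub_smul_rotation, smul_smul, inv_mul_cancel₀ hsin.ne', one_smul]

lemma exists_mem_Ioc_rotation_eq {x y : V} (hxy : ‖x‖ = ‖y‖) (a : ℝ) :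
    ∃ θ ∈ Ioc a (a + 2 * π), o.rotation θ x = y := by
  refine ⟨toIocMod two_pi_pos a (o.oangle x y).toReal, toIocMod_mem_Ioc _ _ _, ?_⟩
  rw [← self_sub_toIocDiv_zsmul, Real.Angle.coe_sub, Real.Angle.coe_zsmul, Real.Angle.coe_two_pi,
    smul_zero, sub_zero, Real.Angle.coe_toReal]
  exact (o.rotation_oangle_eq_iff_norm_eq x y).mpr hxy

def supportDiscAngles (e : V) (K : Set V) (R : ℝ) : Set ℝ :=
  {θ | ∃ w ∈ K, K ⊆ closedBall (w - R • o.rotation θ e) R}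

variable {e : V} {K : Set V} {R : ℝ}

lemma isClosed_supportDiscAngles (hK : IsCompact K) : IsClosed (supportDiscAngles o e K R) :=
  (hK.isClosed_setOf_exists_subset_closedBall R).preimage (o.continuous_rotation_coe_apply e)

lemma add_two_pi_mem_supportDiscAngles_iff {θ : ℝ} :
    θ + 2 * π ∈ supportDiscAngles o e K R ↔ θ ∈ supportDiscAngles o e K R := by
  simp only [supportDiscAngles, mem_ofPred_eq, o.rotation_coe_add_two_pi]

lemma norm_rotation_eq_one (he : ‖e‖ = 1) (θ : ℝ) : ‖o.rotation θ e‖ = 1 := by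
  rw [LinearIsometryEquiv.norm_map, he]

lemma isMaxOn_inner_rotation_of_mem_gap (hint : (interior K).Nonempty)
    (hnormal : ∀ w ∈ frontier K, ∃ u, ‖u‖ = 1 ∧ K ⊆ closedBall (w - R • u) R)
    (he : ‖e‖ = 1) {α β θ : ℝ}
    (hgap : ∀ ψ ∈ Ioo α β, ψ ∉ supportDiscAngles o e K R) (hθ : θ ∈ Ioo α β) {w : V}
    (hwK : w ∈ K) (hw : IsMaxOn (⟪·, o.rotation θ e⟫) K w) :
    IsMaxOn (⟪·, o.rotation α e⟫) K w ∨ IsMaxOn (⟪·, o.rotation β e⟫) K w := by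
  have hne : ∀ φ : ℝ, o.rotation φ e ≠ 0 := fun φ =>
    ne_zero_of_norm_ne_zero ((o.norm_rotation_eq_one he φ).trans_ne one_ne_zero)
  obtain ⟨u, hu, hdisc⟩ := hnormal w (hw.mem_frontier_of_inner (hne θ) hwK)
  obtain ⟨ψ, ⟨hθψ, hψθ⟩, rfl⟩ := o.exists_mem_Ioc_rotation_eq (he.trans hu.symm) θ
  have hψ : ψ ∈ supportDiscAngles o e K R := ⟨w, hwK, hdisc⟩
  have hβψ : β ≤ ψ := not_lt.mp fun h => hgap ψ ⟨hθ.1.trans hθψ, h⟩ hψ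
  have hψα : ψ - 2 * π ≤ α := not_lt.mp fun h => hgap (ψ - 2 * π) ⟨h, by linarith [hθ.2]⟩
    ((o.add_two_pi_mem_supportDiscAngles_iff).mp (by rwa [sub_add_cancel]))
  have hwψ := isMaxOn_inner_of_subset_closedBall hu hdisc
  rcases lt_trichotomy (ψ - θ) π with h | h | h
  · obtain ⟨s, t, hs, ht, hcomb⟩ :=
      o.exists_rotation_eq_add_smul hθ.2.le hβψ (by linarith) e
    exact .inr (hcomb ▸ hw.inner_add_smul hs ht hwψ)
  · rw [show ψ = θ + π by linarith, o.rotation_coe_add_pi] at hwψ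
    exact absurd (interior_eq_empty_of_isMaxOn_inner_neg (hne θ) hw hwψ) hint.ne_empty
  · obtain ⟨s, t, hs, ht, hcomb⟩ :=
      o.exists_rotation_eq_add_smul hψα hθ.1.le (by linarith) e
    rw [← o.rotation_coe_add_two_pi (ψ - 2 * π), sub_add_cancel] at hcomb
    exact .inl (hcomb ▸ hwψ.inner_add_smul hs ht hw)

lemma exists_mem_Ioo_inter_supportDiscAngles (hK : IsCompact K) (hKconv : StrictConvex ℝ K)
    (hint : (interior K).Nonempty)
    (hnormal : ∀ w ∈ frontier K, ∃ u, ‖u‖ = 1 ∧ K ⊆ closedBall (w - R • u) R)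
    (hR : 0 ≤ R) (he : ‖e‖ = 1) {α β : ℝ} (hα : α ∈ supportDiscAngles o e K R)
    (hβ : β ∈ supportDiscAngles o e K R) (hαβ : α < β) :
    (Ioo α β ∩ supportDiscAngles o e K R).Nonempty := by
  by_contra hgap
  replace hgap : ∀ θ ∈ Ioo α β, θ ∉ supportDiscAngles o e K R := fun θ hθ hθS =>
    hgap ⟨θ, hθ, hθS⟩
  have hunit := o.norm_rotation_eq_one he
  have hne : ∀ θ : ℝ, o.rotation θ e ≠ 0 := fun θ =>
    ne_zero_of_norm_ne_zero ((hunit θ).trans_ne one_ne_zero)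
  obtain ⟨w₁, hw₁, hdisc₁⟩ := hα
  obtain ⟨w₂, hw₂, hdisc₂⟩ := hβ
  have hmax₁ := isMaxOn_inner_of_subset_closedBall (hunit α) hdisc₁
  have hmax₂ := isMaxOn_inner_of_subset_closedBall (hunit β) hdisc₂
  have hcover : ∀ θ ∈ Icc α β,
      IsMaxOn (⟪·, o.rotation θ e⟫) K w₁ ∨ IsMaxOn (⟪·, o.rotation θ e⟫) K w₂ := by
    intro θ hθ
    rcases eq_or_lt_of_le hθ.1 with rfl | hαθ
    · exact .inl hmax₁
    rcases eq_or_lt_of_le hθ.2 with rfl | hθβ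
    · exact .inr hmax₂
    obtain ⟨w, hw, hmax⟩ := hK.exists_mem_frontier_isMaxOn_inner (hint.mono interior_subset)
      (hne θ)
    have hwK := hK.isClosed.frontier_subset hw
    refine (o.isMaxOn_inner_rotation_of_mem_gap hint hnormal he hgap ⟨hαθ, hθβ⟩ hwK hmax).imp
      (fun h => ?_) (fun h => ?_)
    · rwa [hKconv.eq_of_isMaxOn_inner (hne α) hw₁ hwK hmax₁ h]
    · rwa [hKconv.eq_of_isMaxOn_inner (hne β) hw₂ hwK hmax₂ h]
  obtain rfl : w₁ = w₂ := hKconv.eq_of_forall_isMaxOn_inner_or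
    (o.continuous_rotation_coe_apply e) hne hαβ.le hw₁ hw₂ hmax₁ hmax₂ hcover
  have hlt : β - α < π := by
    by_contra! hle
    have hanti : IsMaxOn (⟪·, -o.rotation α e⟫) K w₁ := by
      rw [← o.rotation_coe_add_pi]
      simpa using hcover (α + π) ⟨by linarith [pi_pos], by linarith⟩
    exact hint.ne_empty (interior_eq_empty_of_isMaxOn_inner_neg (hne α) hmax₁ hanti)
  obtain ⟨s, t, hs, ht, hcomb⟩ :=
    o.exists_rotation_eq_add_smul (b := (α + β) / 2) (by linarith) (by linarith) hlt e
  exact hgap ((α + β) / 2) ⟨by linarith, by linarith⟩ ⟨w₁, hw₁,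
    subset_closedBall_of_eq_add_smul hR (hunit α) (hunit _) (hunit β) hs ht hcomb hdisc₁ hdisc₂⟩

end Orientation

section Plane

variable {V : Type*} [NormedAddCommGroup V] [InnerProductSpace ℝ V] [Fact (finrank ℝ V = 2)]
  {K : Set V} {R : ℝ}

theorem exists_subset_closedBall_of_slides (hK : IsCompact K) (hKconv : Convex ℝ K)
    (hint : (interior K).Nonempty)
    (hslide : ∀ x ∈ frontier K, ∃ p, dist x p = R ∧ K ⊆ closedBall p R) {u : V} (hu : ‖u‖ = 1) :
    ∃ w ∈ K, K ⊆ closedBall (w - R • u) R := by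
  have : Nontrivial V := nontrivial_of_finrank_eq_succ (Fact.out : finrank ℝ V = 2)
  have : FiniteDimensional ℝ V := .of_fact_finrank_eq_two
  obtain ⟨w₀, hw₀, -⟩ := hK.exists_mem_frontier_isMaxOn_inner (hint.mono interior_subset)
    (norm_ne_zero_iff.mp (hu.trans_ne one_ne_zero))
  obtain ⟨p, hdist, hsub⟩ := hslide w₀ hw₀
  have hR : R ≠ 0 := by
    rintro rfl
    have := interior_mono hsub
    rw [closedBall_zero, interior_singleton] at this
    exact hint.ne_empty (subset_empty_iff.mp this)
  have hnormal : ∀ w ∈ frontier K, ∃ u, ‖u‖ = 1 ∧ K ⊆ closedBall (w - R • u) R := fun w hw =>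
    let ⟨p, hdist, hsub⟩ := hslide w hw
    exists_norm_eq_one_subset_closedBall hR hdist hsub
  obtain ⟨e, he, hdisc⟩ := hnormal w₀ hw₀
  let o : Orientation ℝ V (Fin 2) := (finBasisOfFinrankEq ℝ V Fact.out).orientation
  have h₀ : (0 : ℝ) ∈ o.supportDiscAngles e K R :=
    ⟨w₀, hK.isClosed.frontier_subset hw₀, by rwa [Real.Angle.coe_zero, o.rotation_zero,
      LinearIsometryEquiv.coe_refl, id]⟩
  have h₂π : 2 * π ∈ o.supportDiscAngles e K R := by
    simpa only [zero_add] using o.add_two_pi_mem_supportDiscAngles_iff.mpr h₀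
  have hcover : Icc 0 (2 * π) ⊆ o.supportDiscAngles e K R :=
    (o.isClosed_supportDiscAngles hK).Icc_subset_of_forall_Ioo_inter_nonempty h₀ h₂π
      fun α hα β hβ _ hαβ _ => o.exists_mem_Ioo_inter_supportDiscAngles hK
        (hKconv.strictConvex_of_frontier_subset_sphere hslide) hint hnormal
        (hdist ▸ dist_nonneg) he hα hβ hαβ
  obtain ⟨θ, hθ, rfl⟩ := o.exists_mem_Ioc_rotation_eq (he.trans hu.symm) 0
  rw [zero_add] at hθ
  exact hcover (Ioc_subset_Icc_self hθ)

end Plane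

/-- If a planar convex body `K` slides freely in a circle of radius `rM`, then for any
two points `x, y ∈ K` and any `r ≥ rM`, the `r`-spindle of `x` and `y` (the intersection of
all closed discs of radius `r` containing both points) is contained in `K`. -/
theorem spindle_subset_of_slides_freely
    (K : Set (EuclideanSpace ℝ (Fin 2))) (rM : ℝ)
    (hKcomp : IsCompact K) (hKconv : Convex ℝ K) (hKint : (interior K).Nonempty)
    (hslide : ∀ x ∈ frontier K, ∃ p, dist x p = rM ∧ K ⊆ closedBall p rM)
    (x y : EuclideanSpace ℝ (Fin 2)) (hx : x ∈ K) (hy : y ∈ K)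
    (r : ℝ) (hr : rM ≤ r) :
    ⋂ p ∈ {p : EuclideanSpace ℝ (Fin 2) | x ∈ closedBall p r ∧ y ∈ closedBall p r},
      closedBall p r ⊆ K := by
  intro z hz
  by_contra hzK
  obtain ⟨u, hu, hsep⟩ := exists_norm_eq_one_inner_lt_of_notMem hKcomp.isClosed hKconv
    (hKint.mono interior_subset) hzK
  obtain ⟨w, hwK, hdisc⟩ := exists_subset_closedBall_of_slides hKcomp hKconv hKint hslide hu
  have hKr : K ⊆ closedBall (w - r • u) r := hdisc.trans (closedBall_sub_smul_subset hu hr)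
  exact notMem_closedBall_sub_smul_of_inner_lt hu (hsep w hwK)
    (mem_iInter₂.mp hz _ ⟨hKr hx, hKr hy⟩)
end

section
/- If a planar convex body K slides freely in a circle of radius r_M, then for any r ≥ r_M and any subset X ⊆ K, the r-hyperconvex hull of X (the intersection of all closed discs of radius r containing X) is contained in K. -/
open Metric

/-- If a planar convex body `K` slides freely in a circle of radius `rM`, then for any
`r ≥ rM` and any subset `X ⊆ K`, the `r`-hyperconvex hull of `X` (the intersection of
all closed discs of radius `r` containing `X`) is contained in `K`. -/
theorem hyperconvex_hull_subset_of_slides_freely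
    (K : Set (EuclideanSpace ℝ (Fin 2))) (rM : ℝ)
    (hKcomp : IsCompact K) (hKconv : Convex ℝ K) (hKint : (interior K).Nonempty)
    (hslide : ∀ x ∈ frontier K, ∃ p, dist x p = rM ∧ K ⊆ closedBall p rM)
    (r : ℝ) (hr : rM ≤ r)
    (X : Set (EuclideanSpace ℝ (Fin 2))) (hX : X ⊆ K) :
    ⋂ p ∈ {p : EuclideanSpace ℝ (Fin 2) | X ⊆ closedBall p r}, closedBall p r ⊆ K := by
  intro y hy
  by_contra hyK
  obtain ⟨w, hw⟩ := hKint
  have hwK : w ∈ K := interior_subset hw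
  -- parameters t such that w + t (y - w) ∈ K
  set T : Set ℝ := {t : ℝ | t ∈ Set.Icc (0:ℝ) 1 ∧ w + t • (y - w) ∈ K} with hTdef
  have hT0 : (0:ℝ) ∈ T := by
    refine ⟨Set.mem_Icc.mpr ⟨le_refl 0, zero_le_one⟩, ?_⟩
    simpa using hwK
  have hTne : T.Nonempty := ⟨0, hT0⟩
  have hTbdd : BddAbove T := ⟨1, fun t ht => ht.1.2⟩
  have hTclosed : IsClosed T := by
    have h1 : IsClosed {t : ℝ | w + t • (y - w) ∈ K} :=
      hKcomp.isClosed.preimage (by continuity)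
    exact isClosed_Icc.inter h1
  set t₁ : ℝ := sSup T with ht₁def
  have ht₁T : t₁ ∈ T := hTclosed.csSup_mem hTne hTbdd
  have ht₁0 : 0 ≤ t₁ := le_csSup hTbdd hT0
  have ht₁le1 : t₁ ≤ 1 := csSup_le hTne (fun t ht => ht.1.2)
  set b : EuclideanSpace ℝ (Fin 2) := w + t₁ • (y - w) with hbdef
  have hbK : b ∈ K := ht₁T.2
  have ht₁1 : t₁ < 1 := by
    rcases lt_or_eq_of_le ht₁le1 with h | h
    · exact h
    · exfalso; apply hyK
      have : w + (1:ℝ) • (y - w) ∈ K := by rw [← h]; exact hbK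
      simpa using this
  have hyw : y ≠ w := by
    intro h; exact hyK (h ▸ hwK)
  -- b is not in the interior of K
  have hbnotint : b ∉ interior K := by
    intro hbint
    obtain ⟨ε, hε, hball⟩ := Metric.isOpen_iff.mp isOpen_interior b hbint
    have hnyw : 0 < ‖y - w‖ := by
      rw [norm_pos_iff]; exact sub_ne_zero_of_ne hyw
    set δ : ℝ := min (ε / (2 * ‖y - w‖)) (1 - t₁) with hδdef
    have hδpos : 0 < δ := lt_min (by positivity) (by linarith)
    have hmem : t₁ + δ ∈ T := by
      refine ⟨Set.mem_Icc.mpr ⟨by linarith, ?_⟩, ?_⟩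
      · have := min_le_right (ε / (2 * ‖y - w‖)) (1 - t₁); linarith [hδdef ▸ this]
      · have hdist : dist (w + (t₁ + δ) • (y - w)) b < ε := by
          have : w + (t₁ + δ) • (y - w) - b = δ • (y - w) := by
            rw [hbdef]; module
          rw [dist_eq_norm, this, norm_smul, Real.norm_eq_abs, abs_of_pos hδpos]
          have hδle : δ ≤ ε / (2 * ‖y - w‖) := min_le_left _ _
          calc δ * ‖y - w‖ ≤ (ε / (2 * ‖y - w‖)) * ‖y - w‖ := by
                exact mul_le_mul_of_nonneg_right hδle (le_of_lt hnyw)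
            _ = ε / 2 := by field_simp
            _ < ε := by linarith
        exact interior_subset (hball hdist)
    have : t₁ + δ ≤ t₁ := le_csSup hTbdd hmem
    linarith
  have hbfront : b ∈ frontier K := by
    rw [hKcomp.isClosed.frontier_eq]
    exact ⟨hbK, hbnotint⟩
  obtain ⟨p, hbp, hKp⟩ := hslide b hbfront
  have ht₁pos : 0 < t₁ := by
    rcases lt_or_eq_of_le ht₁0 with h | h
    · exact h
    · exfalso; apply hbnotint
      have : b = w := by rw [hbdef, ← h]; simp
      rw [this]; exact hw
  -- w is strictly inside the ball around p
  have hwp : dist w p < rM := by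
    obtain ⟨ε, hε, hballw⟩ := Metric.isOpen_iff.mp isOpen_interior w hw
    by_cases hwep : w = p
    · -- then rM > 0 since a point at distance ε/2 from w is in K
      have hvK : w + (ε/2) • (EuclideanSpace.single (0 : Fin 2) (1:ℝ)) ∈ K := by
        apply interior_subset; apply hballw
        rw [mem_ball, dist_eq_norm]
        have : w + (ε/2) • (EuclideanSpace.single (0 : Fin 2) (1:ℝ)) - w
            = (ε/2) • (EuclideanSpace.single (0 : Fin 2) (1:ℝ)) := by abel
        rw [this, norm_smul, Real.norm_eq_abs, abs_of_pos (by linarith),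
          EuclideanSpace.norm_single]
        simp; linarith
      have := hKp hvK
      rw [mem_closedBall, dist_eq_norm] at this
      have heq : w + (ε/2) • (EuclideanSpace.single (0 : Fin 2) (1:ℝ)) - p
          = (ε/2) • (EuclideanSpace.single (0 : Fin 2) (1:ℝ)) := by
        rw [hwep]; abel
      rw [heq, norm_smul, Real.norm_eq_abs, abs_of_pos (by linarith),
        EuclideanSpace.norm_single] at this
      simp at this
      rw [hwep, dist_self]
      linarith
    · have hnwp : 0 < ‖w - p‖ := by
        rw [norm_pos_iff]; exact sub_ne_zero_of_ne hwep
      set v : EuclideanSpace ℝ (Fin 2) := w + ((ε/2) * ‖w - p‖⁻¹) • (w - p) with hvdef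
      have hvK : v ∈ K := by
        apply interior_subset; apply hballw
        rw [mem_ball, dist_eq_norm]
        have : v - w = ((ε/2) * ‖w - p‖⁻¹) • (w - p) := by rw [hvdef]; abel
        rw [this, norm_smul, Real.norm_eq_abs]
        rw [abs_of_pos (by positivity)]
        rw [mul_assoc, inv_mul_cancel₀ (ne_of_gt hnwp)]
        simp; linarith
      have hvp := hKp hvK
      rw [mem_closedBall, dist_eq_norm] at hvp
      have heq : v - p = (1 + (ε/2) * ‖w - p‖⁻¹) • (w - p) := by
        rw [hvdef]; module
      rw [heq, norm_smul, Real.norm_eq_abs, abs_of_pos (by positivity)] at hvp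
      have hexp : (1 + (ε/2) * ‖w - p‖⁻¹) * ‖w - p‖ = ‖w - p‖ + ε/2 := by
        field_simp
      rw [hexp] at hvp
      rw [dist_eq_norm]
      linarith
  -- the sliding ball excludes y strictly
  have hyp : rM < dist y p := by
    by_contra h
    push_neg at h
    have hcomb : b - p = (1 - t₁) • (w - p) + t₁ • (y - p) := by
      rw [hbdef]; module
    have hnorm : ‖b - p‖ ≤ (1 - t₁) * ‖w - p‖ + t₁ * ‖y - p‖ := by
      rw [hcomb]
      calc ‖(1 - t₁) • (w - p) + t₁ • (y - p)‖
          ≤ ‖(1 - t₁) • (w - p)‖ + ‖t₁ • (y - p)‖ := norm_add_le _ _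
        _ = (1 - t₁) * ‖w - p‖ + t₁ * ‖y - p‖ := by
            rw [norm_smul, norm_smul, Real.norm_eq_abs, Real.norm_eq_abs,
              abs_of_pos (by linarith), abs_of_pos ht₁pos]
    rw [dist_eq_norm] at hbp hwp h
    have h1 : (1 - t₁) * ‖w - p‖ < (1 - t₁) * rM :=
      mul_lt_mul_of_pos_left hwp (by linarith)
    have h2 : t₁ * ‖y - p‖ ≤ t₁ * rM := mul_le_mul_of_nonneg_left h (le_of_lt ht₁pos)
    have : ‖b - p‖ < rM := by nlinarith
    rw [hbp] at this
    exact lt_irrefl rM this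
  -- build the big ball of radius r that contains X but not y
  have hrM0 : 0 ≤ rM := hbp ▸ dist_nonneg
  have hpy : 0 < dist p y := by rw [dist_comm]; linarith
  set c : ℝ := (r - rM) / dist p y with hcdef
  have hc0 : 0 ≤ c := div_nonneg (by linarith) (le_of_lt hpy)
  set q : EuclideanSpace ℝ (Fin 2) := p + c • (p - y) with hqdef
  have hpq : dist p q = r - rM := by
    rw [dist_eq_norm]
    have : p - q = (-c) • (p - y) := by rw [hqdef]; module
    rw [this, norm_smul, Real.norm_eq_abs, abs_neg, abs_of_nonneg hc0, hcdef,
      ← dist_eq_norm, div_mul_cancel₀ _ (ne_of_gt hpy)]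
  have hXq : X ⊆ closedBall q r := by
    intro z hz
    rw [mem_closedBall]
    have h1 : dist z p ≤ rM := mem_closedBall.mp (hKp (hX hz))
    calc dist z q ≤ dist z p + dist p q := dist_triangle _ _ _
      _ ≤ rM + (r - rM) := by rw [hpq]; linarith
      _ = r := by ring
  have hyq : dist y q ≤ r := by
    have := Set.mem_iInter₂.mp hy q hXq
    exact mem_closedBall.mp this
  have hyq' : dist y q = dist y p + (r - rM) := by
    rw [dist_eq_norm, dist_eq_norm]
    have : y - q = (1 + c) • (y - p) := by rw [hqdef]; module
    rw [this, norm_smul, Real.norm_eq_abs, abs_of_nonneg (by linarith)]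
    have hc : c * ‖y - p‖ = r - rM := by
      rw [hcdef, dist_comm p y, dist_eq_norm, div_mul_cancel₀]
      rw [← dist_eq_norm]; rw [dist_comm p y] at hpy; exact ne_of_gt hpy
    rw [add_mul, one_mul, hc]
  rw [hyq'] at hyq
  linarith
end

section
/- Let K be a planar convex body whose boundary is C² with curvature everywhere strictly greater than 1 (so that a unit disc cannot roll outside without separating). For any nonempty disc-cap D = K \ (int(B²) + p) there exists a unique boundary point x₀ ∈ ∂K ∩ ∂D and a unique t ≥ 0 such that B² + p = B² + x₀ − (1+t)·u_{x₀}, where u_{x₀} is the outer unit normal of K at x₀. -/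
/-!
Parametrize `∂K` by arc length `γ`, with unit tangent `T` and normal `N = rotCW T`; the supporting
line condition at a point of positive curvature forces `u = N`. Fix `s₀` and put
`c = γ s₀ - N s₀`. The functions `a = ⟪γ - c, T⟫` and `b = ⟪γ - c, N⟫` solve `a' = 1 - κ b`,
`b' = κ a` with `a s₀ = 0`, `b s₀ = 1`, so for a tangent angle `φ` (with `φ' = κ`)
`b s - 1 = ∫_{s₀}^{s} (1 - κ τ) sin (φ s - φ τ) dτ`, which is negative while
`0 < |φ s - φ s₀| ≤ π`. Every unit vector is the normal `N s` at such an `s`, and `b s` bounds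
`⟪z - c, N s⟫` for `z ∈ K`; hence `K \ {γ s₀}` lies in the open unit disc about `c`
(Blaschke's rolling theorem).

So if `p = x - (1 + t) u x` with `t ≥ 0`, then `x` is the only point of `K` farthest from `p`.
The farthest point `x₀` of `K` from `p` lies on `∂K` at distance `≥ 1` (the cap is nonempty), and
has outer normal `(x₀ - p) / ‖x₀ - p‖`: this gives existence, and the previous sentence uniqueness.
-/

open Real Filter Set Metric Topology intervalIntegral
open scoped RealInnerProductSpace

local notation "ℝ²" => EuclideanSpace ℝ (Fin 2)

theorem IsLocalMax.deriv_deriv_nonpos {f : ℝ → ℝ} {x : ℝ} (hmax : IsLocalMax f x)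
    (hc : ContinuousAt f x) : deriv (deriv f) x ≤ 0 := by
  by_contra! hpos
  have hmin := isLocalMin_of_deriv_deriv_pos hpos hmax.deriv_eq_zero hc
  have hconst : f =ᶠ[nhds x] fun _ => f x :=
    (hmin.and hmax).mono fun y hy => le_antisymm hy.2 hy.1
  simp [hconst.deriv.deriv_eq] at hpos

theorem exists_cos_sin_eq_mem_Icc {x y : ℝ} (h : x ^ 2 + y ^ 2 = 1) (a : ℝ) :
    ∃ ψ ∈ Set.Icc (a - π) (a + π), cos ψ = x ∧ sin ψ = y := by
  set z : ℂ := ⟨x, y⟩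
  have hz : ‖z‖ = 1 := by simp [Complex.norm_eq_sqrt_sq_add_sq, z, h]
  have hz0 : z ≠ 0 := norm_ne_zero_iff.mp (by rw [hz]; exact one_ne_zero)
  have hmem := toIocMod_mem_Ioc two_pi_pos (a - π) z.arg
  have hshift : toIocMod two_pi_pos (a - π) z.arg =
      z.arg - toIocDiv two_pi_pos (a - π) z.arg * (2 * π) := by
    rw [← self_sub_toIocMod_eq_mul, sub_sub_cancel]
  refine ⟨toIocMod two_pi_pos (a - π) z.arg, ⟨hmem.1.le, by linarith [hmem.2]⟩, ?_, ?_⟩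
  · rw [hshift, cos_sub_int_mul_two_pi, Complex.cos_arg hz0, hz, div_one]
  · rw [hshift, sin_sub_int_mul_two_pi, Complex.sin_arg, hz, div_one]

theorem Function.surjective_of_one_le_deriv {φ φ' : ℝ → ℝ} (hφ : ∀ s, HasDerivAt φ (φ' s) s)
    (h : ∀ s, 1 ≤ φ' s) : Function.Surjective φ := by
  have hmono : Monotone fun s => φ s - s :=
    monotone_of_hasDerivAt_nonneg (fun s => (hφ s).sub (hasDerivAt_id s))
      fun s => sub_nonneg.mpr (h s)
  refine Continuous.surjective (continuous_iff_continuousAt.mpr fun s => (hφ s).continuousAt)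
    (tendsto_atTop_mono' _ ?_ (tendsto_atTop_add_const_left _ (φ 0) tendsto_id))
    (tendsto_atBot_mono' _ ?_ (tendsto_atBot_add_const_left _ (φ 0) tendsto_id))
  · filter_upwards [eventually_ge_atTop 0] with s hs
    have := hmono hs
    simp only [id] at this ⊢
    linarith
  · filter_upwards [eventually_le_atBot 0] with s hs
    have := hmono hs
    simp only [id] at this ⊢
    linarith

theorem eq_cos_sin_of_hasDerivAt {x y φ κ : ℝ → ℝ} (hx : ∀ s, HasDerivAt x (-(κ s * y s)) s)
    (hy : ∀ s, HasDerivAt y (κ s * x s) s) (hφ : ∀ s, HasDerivAt φ (κ s) s) {s₀ : ℝ}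
    (hx₀ : x s₀ = cos (φ s₀)) (hy₀ : y s₀ = sin (φ s₀)) (s : ℝ) :
    x s = cos (φ s) ∧ y s = sin (φ s) := by
  set E : ℝ → ℝ := fun s => (x s - cos (φ s)) ^ 2 + (y s - sin (φ s)) ^ 2
  have hE : ∀ s, HasDerivAt E 0 s := fun s => by
    refine ((((hx s).sub (hφ s).cos).pow 2).add (((hy s).sub (hφ s).sin).pow 2)).congr_deriv ?_
    simp only [Pi.sub_apply, Nat.cast_ofNat]
    ring
  have hEs : E s = 0 := by
    rw [is_const_of_deriv_eq_zero (fun s => (hE s).differentiableAt) (fun s => (hE s).deriv) s s₀]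
    simp [E, hx₀, hy₀]
  constructor <;> nlinarith [sq_nonneg (x s - cos (φ s)), sq_nonneg (y s - sin (φ s))]

theorem sub_one_eq_integral_sin {κ φ a b : ℝ → ℝ} (hκ : Continuous κ)
    (hφ : ∀ s, HasDerivAt φ (κ s) s) (ha : ∀ s, HasDerivAt a (1 - κ s * b s) s)
    (hb : ∀ s, HasDerivAt b (κ s * a s) s) {s₀ : ℝ} (ha₀ : a s₀ = 0) (hb₀ : b s₀ = 1) (s : ℝ) :
    b s - 1 = ∫ τ in s₀..s, (1 - κ τ) * sin (φ s - φ τ) := by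
  have hφc : Continuous φ := continuous_iff_continuousAt.mpr fun s => (hφ s).continuousAt
  have hcos : Continuous fun τ => (1 - κ τ) * cos (φ τ) := by fun_prop
  have hsin : Continuous fun τ => (1 - κ τ) * sin (φ τ) := by fun_prop
  have hC : ∫ τ in s₀..s, (1 - κ τ) * cos (φ τ) = a s * cos (φ s) + (b s - 1) * sin (φ s) := by
    rw [integral_eq_sub_of_hasDerivAt (f := fun s => a s * cos (φ s) + (b s - 1) * sin (φ s))
      (fun τ _ => (((ha τ).mul (hφ τ).cos).add (((hb τ).sub_const 1).mul (hφ τ).sin)).congr_deriv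
        (by ring)) (hcos.intervalIntegrable _ _)]
    simp [ha₀, hb₀]
  have hS : ∫ τ in s₀..s, (1 - κ τ) * sin (φ τ) = a s * sin (φ s) - (b s - 1) * cos (φ s) := by
    rw [integral_eq_sub_of_hasDerivAt (f := fun s => a s * sin (φ s) - (b s - 1) * cos (φ s))
      (fun τ _ => (((ha τ).mul (hφ τ).sin).sub (((hb τ).sub_const 1).mul (hφ τ).cos)).congr_deriv
        (by ring)) (hsin.intervalIntegrable _ _)]
    simp [ha₀, hb₀]
  have hsplit : (fun τ => (1 - κ τ) * sin (φ s - φ τ)) = fun τ =>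
      sin (φ s) * ((1 - κ τ) * cos (φ τ)) - cos (φ s) * ((1 - κ τ) * sin (φ τ)) := by
    funext τ
    rw [sin_sub]
    ring
  rw [hsplit, integral_sub ((hcos.intervalIntegrable _ _).const_mul _)
    ((hsin.intervalIntegrable _ _).const_mul _), integral_const_mul, integral_const_mul, hC, hS]
  linear_combination (1 - b s) * sin_sq_add_cos_sq (φ s)

theorem lt_one_of_abs_sub_le_pi {κ φ a b : ℝ → ℝ} (hκ : Continuous κ) (hκ₁ : ∀ s, 1 < κ s)
    (hφ : ∀ s, HasDerivAt φ (κ s) s) (ha : ∀ s, HasDerivAt a (1 - κ s * b s) s)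
    (hb : ∀ s, HasDerivAt b (κ s * a s) s) {s₀ s : ℝ} (ha₀ : a s₀ = 0) (hb₀ : b s₀ = 1)
    (hs : s ≠ s₀) (hwin : |φ s - φ s₀| ≤ π) : b s < 1 := by
  have hmono : StrictMono φ := strictMono_of_hasDerivAt_pos hφ fun s => by linarith [hκ₁ s]
  have hint : Continuous fun τ => (1 - κ τ) * sin (φ s - φ τ) := by
    have hφc : Continuous φ := continuous_iff_continuousAt.mpr fun s => (hφ s).continuousAt
    fun_prop
  rw [abs_le] at hwin
  rw [← sub_neg, sub_one_eq_integral_sin hκ hφ ha hb ha₀ hb₀]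
  rcases hs.lt_or_gt with hlt | hgt
  · rw [integral_symm, neg_neg_iff_pos]
    refine intervalIntegral_pos_of_pos_on (hint.intervalIntegrable _ _) (fun τ hτ => ?_) hlt
    have hφτ₁ := hmono hτ.1
    have hφτ₂ := hmono hτ.2
    have : sin (φ s - φ τ) < 0 := sin_neg_of_neg_of_neg_pi_lt (by linarith) (by linarith)
    nlinarith [hκ₁ τ]
  · rw [← neg_pos, ← integral_neg]
    refine intervalIntegral_pos_of_pos_on (hint.neg.intervalIntegrable _ _) (fun τ hτ => ?_) hgt
    have hφτ₁ := hmono hτ.1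
    have hφτ₂ := hmono hτ.2
    have : 0 < sin (φ s - φ τ) := sin_pos_of_pos_of_lt_pi (by linarith) (by linarith)
    nlinarith [hκ₁ τ]

section FarthestPoint

variable {E : Type*} [NormedAddCommGroup E] {K : Set E} {x p : E}

theorem mem_frontier_of_forall_norm_sub_le [NormedSpace ℝ E] (hx : x ∈ K) (hxp : x ≠ p)
    (hmax : ∀ y ∈ K, ‖y - p‖ ≤ ‖x - p‖) : x ∈ frontier K := by
  refine ⟨subset_closure hx, fun hint => ?_⟩
  have hray : Tendsto (fun ε : ℝ => x + ε • (x - p)) (𝓝[>] 0) (𝓝 x) :=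
    tendsto_nhdsWithin_of_tendsto_nhds <|
      (by fun_prop : Continuous fun ε : ℝ => x + ε • (x - p)).tendsto' 0 x (by simp)
  obtain ⟨ε, hεK, hε⟩ :=
    ((hray.eventually (mem_interior_iff_mem_nhds.mp hint)).and self_mem_nhdsWithin).exists
  have hε : 0 < ε := hε
  have hfar := hmax _ hεK
  rw [show x + ε • (x - p) - p = (1 + ε) • (x - p) by module, norm_smul,
    Real.norm_of_nonneg (by linarith)] at hfar
  nlinarith [norm_pos_iff.mpr (sub_ne_zero.mpr hxp)]

theorem inner_sub_nonpos_of_forall_norm_sub_le [InnerProductSpace ℝ E]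
    (hmax : ∀ y ∈ K, ‖y - p‖ ≤ ‖x - p‖) {y : E} (hy : y ∈ K) : ⟪y - x, x - p⟫ ≤ 0 := by
  have hsq := pow_le_pow_left₀ (norm_nonneg _) (hmax y hy) 2
  rw [← sub_add_sub_cancel y x p, norm_add_sq_real] at hsq
  nlinarith [sq_nonneg ‖y - x‖]

theorem eq_sub_norm_smul_of_forall_norm_sub_le [InnerProductSpace ℝ E] {u : E}
    (huniq : ∀ v, ‖v‖ = 1 → (∀ y ∈ K, ⟪y - x, v⟫ ≤ 0) → v = u) (hxp : x ≠ p)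
    (hmax : ∀ y ∈ K, ‖y - p‖ ≤ ‖x - p‖) : p = x - ‖x - p‖ • u := by
  have hr : ‖x - p‖ ≠ 0 := norm_ne_zero_iff.mpr (sub_ne_zero.mpr hxp)
  have hu : ‖x - p‖⁻¹ • (x - p) = u := by
    refine huniq _ (by rw [norm_smul, norm_inv, norm_norm, inv_mul_cancel₀ hr]) fun y hy => ?_
    rw [real_inner_smul_right]
    exact mul_nonpos_of_nonneg_of_nonpos (by positivity)
      (inner_sub_nonpos_of_forall_norm_sub_le hmax hy)
  rw [← hu, smul_smul, mul_inv_cancel₀ hr, one_smul, sub_sub_cancel]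

theorem norm_sub_lt_norm_sub_of_norm_sub_lt_one [NormedSpace ℝ E] {w y : E} {t : ℝ}
    (hw : ‖w‖ = 1) (ht : 0 ≤ t) (hy : ‖y - (x - w)‖ < 1) :
    ‖y - (x - (1 + t) • w)‖ < ‖x - (x - (1 + t) • w)‖ := by
  calc ‖y - (x - (1 + t) • w)‖ = ‖(y - (x - w)) + t • w‖ := by congr 1; module
    _ ≤ ‖y - (x - w)‖ + t := by
      grw [norm_add_le, norm_smul, hw, Real.norm_of_nonneg ht, mul_one]
    _ < 1 + t := by linarith
    _ = ‖x - (x - (1 + t) • w)‖ := by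
      rw [sub_sub_cancel, norm_smul, hw, mul_one, Real.norm_of_nonneg (by linarith)]

end FarthestPoint

-- Rotation by `-π/2`: it turns the unit tangent of a positively curved boundary curve into the
-- outer unit normal.
noncomputable def rotCW : ℝ² →L[ℝ] ℝ² :=
  (EuclideanSpace.proj 1).smulRight (EuclideanSpace.single 0 1) -
    (EuclideanSpace.proj 0).smulRight (EuclideanSpace.single 1 1)

@[simp] lemma rotCW_apply_zero (v : ℝ²) : rotCW v 0 = v 1 := by simp [rotCW]
@[simp] lemma rotCW_apply_one (v : ℝ²) : rotCW v 1 = -v 0 := by simp [rotCW]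

lemma inner_fin_two (v w : ℝ²) : ⟪v, w⟫ = v 0 * w 0 + v 1 * w 1 := by
  simp only [PiLp.inner_apply, RCLike.inner_apply, ringHom_apply, Fin.sum_univ_two]
  ring

lemma norm_sq_fin_two (v : ℝ²) : ‖v‖ ^ 2 = v 0 ^ 2 + v 1 ^ 2 := by
  simp [EuclideanSpace.real_norm_sq_eq, Fin.sum_univ_two]

@[simp] lemma rotCW_rotCW (v : ℝ²) : rotCW (rotCW v) = -v := by
  ext i; fin_cases i <;> simp

@[simp] lemma inner_rotCW_self (v : ℝ²) : ⟪v, rotCW v⟫ = 0 := by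
  rw [inner_fin_two]
  simp only [rotCW_apply_zero, rotCW_apply_one]
  ring

@[simp] lemma norm_rotCW (v : ℝ²) : ‖rotCW v‖ = ‖v‖ := by
  rw [← sq_eq_sq₀ (norm_nonneg _) (norm_nonneg _), norm_sq_fin_two, norm_sq_fin_two]
  simp only [rotCW_apply_zero, rotCW_apply_one, even_two, Even.neg_pow]
  ring

lemma eq_rotCW_of_inner_eq_zero {v w : ℝ²} (hv : ‖v‖ = 1) (hw : ‖w‖ = 1) (h₀ : ⟪v, w⟫ = 0)
    (hpos : 0 ≤ ⟪rotCW v, w⟫) : w = rotCW v := by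
  have hv' := norm_sq_fin_two v
  have hw' := norm_sq_fin_two w
  rw [hv] at hv'
  rw [hw] at hw'
  rw [inner_fin_two] at h₀ hpos
  simp only [rotCW_apply_zero, rotCW_apply_one] at hpos
  have hsq : (v 1 * w 0 - v 0 * w 1) ^ 2 = 1 := by
    linear_combination (-(w 0 ^ 2 + w 1 ^ 2)) * hv' - hw' - (v 0 * w 0 + v 1 * w 1) * h₀
  have hdet : v 1 * w 0 - v 0 * w 1 = 1 := by nlinarith
  ext i
  fin_cases i
  · simp only [Fin.zero_eta, rotCW_apply_zero]
    linear_combination v 1 * hdet + v 0 * h₀ + w 0 * hv'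
  · simp only [Fin.mk_one, rotCW_apply_one]
    linear_combination (-v 0) * hdet + v 1 * h₀ + w 1 * hv'

lemma exists_rotCW_deriv_eq {γ : ℝ → ℝ²} {φ φ' : ℝ → ℝ} (hφ : ∀ s, HasDerivAt φ (φ' s) s)
    (hφ' : ∀ s, 1 ≤ φ' s) (hT : ∀ s, deriv γ s = !₂[cos (φ s), sin (φ s)]) (s₀ : ℝ) {v : ℝ²}
    (hv : ‖v‖ = 1) : ∃ s, |φ s - φ s₀| ≤ π ∧ rotCW (deriv γ s) = v := by
  have hv' := norm_sq_fin_two v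
  rw [hv] at hv'
  obtain ⟨ψ, hψ, hcos, hsin⟩ :=
    exists_cos_sin_eq_mem_Icc (x := -v 1) (y := v 0) (by linear_combination -hv') (φ s₀)
  obtain ⟨s, rfl⟩ := Function.surjective_of_one_le_deriv hφ hφ' ψ
  refine ⟨s, abs_le.mpr ⟨by linarith [hψ.1], by linarith [hψ.2]⟩, ?_⟩
  ext i
  fin_cases i <;> simp [hT, hcos, hsin]

structure UnitSpeedCurve (γ : ℝ → ℝ²) (κ : ℝ → ℝ) : Prop where
  contDiff : ContDiff ℝ 2 γ
  norm_deriv : ∀ s, ‖deriv γ s‖ = 1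
  curvature_eq : ∀ s, κ s = deriv γ s 0 * deriv (deriv γ) s 1 - deriv γ s 1 * deriv (deriv γ) s 0

namespace UnitSpeedCurve

variable {γ : ℝ → ℝ²} {κ : ℝ → ℝ}

lemma contDiff_deriv (h : UnitSpeedCurve γ κ) : ContDiff ℝ 1 (deriv γ) :=
  ((contDiff_succ_iff_deriv (n := 1)).mp h.contDiff).2.2

lemma hasDerivAt (h : UnitSpeedCurve γ κ) (s : ℝ) : HasDerivAt γ (deriv γ s) s :=
  (h.contDiff.differentiable (by norm_num) s).hasDerivAt

lemma continuous_curvature (h : UnitSpeedCurve γ κ) : Continuous κ := by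
  have h₂ : Continuous (deriv (deriv γ)) :=
    ((contDiff_succ_iff_deriv (n := 0)).mp h.contDiff_deriv).2.2.continuous
  have h₁ := h.contDiff_deriv.continuous
  rw [funext h.curvature_eq]
  fun_prop

lemma hasDerivAt_deriv (h : UnitSpeedCurve γ κ) (s : ℝ) :
    HasDerivAt (deriv γ) (-κ s • rotCW (deriv γ s)) s := by
  have hT := (h.contDiff_deriv.differentiable one_ne_zero s).hasDerivAt
  have horth : ⟪deriv γ s, deriv (deriv γ) s⟫ = 0 := by
    have hconst : (‖deriv γ ·‖ ^ 2) = fun _ => (1 : ℝ) := funext fun τ => by simp [h.norm_deriv τ]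
    have := hT.norm_sq.deriv
    rw [hconst, deriv_const] at this
    linarith
  have hunit := norm_sq_fin_two (deriv γ s)
  rw [h.norm_deriv, one_pow] at hunit
  rw [inner_fin_two] at horth
  refine hT.congr_deriv ?_
  ext i
  fin_cases i
  · simp only [Fin.zero_eta, h.curvature_eq, PiLp.smul_apply, rotCW_apply_zero, smul_eq_mul]
    linear_combination (deriv γ s 0) * horth + deriv (deriv γ) s 0 * hunit
  · simp only [Fin.mk_one, h.curvature_eq, PiLp.smul_apply, rotCW_apply_one, smul_eq_mul]
    linear_combination (deriv γ s 1) * horth + deriv (deriv γ) s 1 * hunit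

lemma hasDerivAt_rotCW_deriv (h : UnitSpeedCurve γ κ) (s : ℝ) :
    HasDerivAt (fun s => rotCW (deriv γ s)) (κ s • deriv γ s) s :=
  (rotCW.hasFDerivAt.comp_hasDerivAt s (h.hasDerivAt_deriv s)).congr_deriv (by simp)

lemma exists_tangent_angle (h : UnitSpeedCurve γ κ) :
    ∃ φ : ℝ → ℝ, (∀ s, HasDerivAt φ (κ s) s) ∧ ∀ s, deriv γ s = !₂[cos (φ s), sin (φ s)] := by
  have hunit := norm_sq_fin_two (deriv γ 0)
  rw [h.norm_deriv, one_pow] at hunit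
  obtain ⟨θ₀, -, hcos, hsin⟩ := exists_cos_sin_eq_mem_Icc hunit.symm 0
  have hκ := h.continuous_curvature
  have hφ : ∀ s, HasDerivAt (fun s => θ₀ + ∫ τ in (0 : ℝ)..s, κ τ) (κ s) s := fun s =>
    (integral_hasDerivAt_right (hκ.intervalIntegrable _ _)
      hκ.aestronglyMeasurable.stronglyMeasurableAtFilter hκ.continuousAt).const_add θ₀
  refine ⟨_, hφ, fun s => ?_⟩
  have hcoord (i : Fin 2) (s : ℝ) :=
    (EuclideanSpace.proj (𝕜 := ℝ) i).hasFDerivAt.comp_hasDerivAt s (h.hasDerivAt_deriv s)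
  obtain ⟨h0, h1⟩ :=
    eq_cos_sin_of_hasDerivAt (x := fun s => deriv γ s 0) (y := fun s => deriv γ s 1)
    (fun s => (hcoord 0 s).congr_deriv (by simp)) (fun s => (hcoord 1 s).congr_deriv (by simp)) hφ
    (s₀ := 0) (by simp [hcos]) (by simp [hsin]) s
  ext i
  fin_cases i
  · simpa using h0
  · simpa using h1

lemma eq_rotCW_deriv_of_forall_inner_nonpos (h : UnitSpeedCurve γ κ) {s : ℝ} (hκ : 0 < κ s)
    {w : ℝ²} (hw : ‖w‖ = 1) (hsupp : ∀ τ, ⟪γ τ - γ s, w⟫ ≤ 0) : w = rotCW (deriv γ s) := by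
  have hG : ∀ τ, HasDerivAt (fun τ => ⟪γ τ, w⟫) ⟪deriv γ τ, w⟫ τ := fun τ =>
    ((h.hasDerivAt τ).inner ℝ (hasDerivAt_const τ w)).congr_deriv (by simp)
  have hmax : IsLocalMax (fun τ => ⟪γ τ, w⟫) s :=
    Eventually.of_forall fun τ => by simpa [inner_sub_left] using hsupp τ
  have hG' : HasDerivAt (fun τ => ⟪deriv γ τ, w⟫) (-κ s * ⟪rotCW (deriv γ s), w⟫) s :=
    ((h.hasDerivAt_deriv s).inner ℝ (hasDerivAt_const s w)).congr_deriv (by simp [inner_smul_left])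
  have h₂ := hmax.deriv_deriv_nonpos (hG s).continuousAt
  rw [funext fun τ => (hG τ).deriv, hG'.deriv] at h₂
  refine eq_rotCW_of_inner_eq_zero (h.norm_deriv s) hw ?_ (by nlinarith)
  rw [← (hG s).deriv]
  exact hmax.deriv_eq_zero

-- `γ s₀ - rotCW (deriv γ s₀)` is the centre of the unit disc tangent to the curve at `γ s₀` from
-- the inside; the inner product is the support function of the curve about that centre, in the
-- normal direction at `γ s`.
lemma inner_sub_center_lt_one (h : UnitSpeedCurve γ κ) (hκ : ∀ s, 1 < κ s) {φ : ℝ → ℝ}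
    (hφ : ∀ s, HasDerivAt φ (κ s) s) {s₀ s : ℝ} (hs : s ≠ s₀) (hwin : |φ s - φ s₀| ≤ π) :
    ⟪γ s - (γ s₀ - rotCW (deriv γ s₀)), rotCW (deriv γ s)⟫ < 1 := by
  set c := γ s₀ - rotCW (deriv γ s₀)
  refine lt_one_of_abs_sub_le_pi h.continuous_curvature hκ hφ (a := fun s => ⟪γ s - c, deriv γ s⟫)
    (fun s => (((h.hasDerivAt s).sub_const c).inner ℝ (h.hasDerivAt_deriv s)).congr_deriv ?_)
    (fun s => (((h.hasDerivAt s).sub_const c).inner ℝ (h.hasDerivAt_rotCW_deriv s)).congr_deriv ?_)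
    ?_ ?_ hs hwin
  · simp only [c, neg_smul, inner_neg_right, real_inner_smul_right, real_inner_self_eq_norm_sq,
      h.norm_deriv, one_pow]
    ring
  · simp [inner_smul_right, real_inner_comm]
  · simp [c, real_inner_comm]
  · simp [c, h.norm_deriv]

lemma norm_sub_center_lt_one (h : UnitSpeedCurve γ κ) (hκ : ∀ s, 1 < κ s) {z : ℝ²}
    (hz : ∀ s, ⟪z - γ s, rotCW (deriv γ s)⟫ ≤ 0) {s₀ : ℝ} (hne : z ≠ γ s₀) :
    ‖z - (γ s₀ - rotCW (deriv γ s₀))‖ < 1 := by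
  obtain ⟨φ, hφ, hT⟩ := h.exists_tangent_angle
  set c := γ s₀ - rotCW (deriv γ s₀)
  set r := ‖z - c‖
  rcases eq_or_ne z c with rfl | hzc
  · simp [r]
  have hr : 0 < r := norm_pos_iff.mpr (sub_ne_zero.mpr hzc)
  obtain ⟨s, hwin, hNs⟩ := exists_rotCW_deriv_eq hφ (fun s => (hκ s).le) hT s₀
    (v := r⁻¹ • (z - c)) (by rw [norm_smul, norm_inv, norm_norm, inv_mul_cancel₀ hr.ne'])
  have hzc : z - c = r • rotCW (deriv γ s) := by
    rw [hNs, smul_smul, mul_inv_cancel₀ hr.ne', one_smul]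
  have hr_eq : r = ⟪z - γ s, rotCW (deriv γ s)⟫ + ⟪γ s - c, rotCW (deriv γ s)⟫ := by
    rw [← inner_add_left, sub_add_sub_cancel, hzc, real_inner_smul_left,
      real_inner_self_eq_norm_sq, norm_rotCW, h.norm_deriv, one_pow, mul_one]
  rcases eq_or_ne s s₀ with rfl | hs
  · have hb : ⟪γ s - c, rotCW (deriv γ s)⟫ = 1 := by simp [c, h.norm_deriv]
    refine lt_of_le_of_ne (by linarith [hz s]) fun hr1 => hne ?_
    rw [← sub_eq_zero, show z - γ s = (z - c) - rotCW (deriv γ s) by simp only [c]; abel, hzc, hr1,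
      one_smul, sub_self]
  · linarith [hz s, h.inner_sub_center_lt_one hκ hφ hs hwin]

end UnitSpeedCurve

theorem disc_cap_vertex_unique_general
    (K : Set (EuclideanSpace ℝ (Fin 2)))
    (hKcomp : IsCompact K)
    (γ : ℝ → EuclideanSpace ℝ (Fin 2)) (hγ : ContDiff ℝ 2 γ)
    (hγspeed : ∀ s, ‖deriv γ s‖ = 1)
    (hγrange : frontier K = Set.range γ)
    (κ : ℝ → ℝ)
    (hκdef : ∀ s, κ s =
      deriv γ s 0 * deriv (deriv γ) s 1 - deriv γ s 1 * deriv (deriv γ) s 0)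
    (hκ : ∀ s, 1 < κ s)
    (u : EuclideanSpace ℝ (Fin 2) → EuclideanSpace ℝ (Fin 2))
    (hu : ∀ x ∈ frontier K, ‖u x‖ = 1 ∧ ∀ y ∈ K, ⟪y - x, u x⟫ ≤ 0)
    (huniq : ∀ x ∈ frontier K, ∀ v, ‖v‖ = 1 → (∀ y ∈ K, ⟪y - x, v⟫ ≤ 0) → v = u x)
    (p : EuclideanSpace ℝ (Fin 2))
    (hD : (K \ ball p 1).Nonempty) :
    ∃! q : EuclideanSpace ℝ (Fin 2) × ℝ,
      q.1 ∈ frontier K ∩ frontier (K \ ball p 1) ∧ 0 ≤ q.2 ∧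
        p = q.1 - (1 + q.2) • u q.1 := by
  have hcurve : UnitSpeedCurve γ κ := ⟨hγ, hγspeed, hκdef⟩
  have hγK : ∀ s, γ s ∈ frontier K := fun s => hγrange ▸ mem_range_self s
  have hfrK : frontier K ⊆ K := hKcomp.isClosed.frontier_subset
  have hnormal : ∀ s, u (γ s) = rotCW (deriv γ s) := fun s =>
    hcurve.eq_rotCW_deriv_of_forall_inner_nonpos (by linarith [hκ s]) (hu _ (hγK s)).1
      fun τ => (hu _ (hγK s)).2 _ (hfrK (hγK τ))
  have hroll : ∀ x ∈ frontier K, ∀ y ∈ K, y ≠ x → ‖y - (x - u x)‖ < 1 := by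
    rintro _ hx y hy hne
    obtain ⟨s, rfl⟩ : _ ∈ range γ := hγrange ▸ hx
    rw [hnormal]
    exact hcurve.norm_sub_center_lt_one hκ (fun s' => hnormal s' ▸ (hu _ (hγK s')).2 y hy) hne
  obtain ⟨x₀, hx₀K, hmax⟩ := hKcomp.exists_isMaxOn (hD.mono sdiff_subset)
    (continuous_id.sub continuous_const).norm.continuousOn
  have hmax : ∀ y ∈ K, ‖y - p‖ ≤ ‖x₀ - p‖ := fun y hy => hmax hy
  have hr : 1 ≤ ‖x₀ - p‖ := by
    obtain ⟨z, hzK, hzp⟩ := hD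
    rw [mem_ball, dist_eq_norm, not_lt] at hzp
    exact hzp.trans (hmax z hzK)
  have hx₀p : x₀ ≠ p := by rintro rfl; norm_num at hr
  have hx₀fr := mem_frontier_of_forall_norm_sub_le hx₀K hx₀p hmax
  refine ⟨(x₀, ‖x₀ - p‖ - 1), ⟨⟨hx₀fr, subset_closure ⟨hx₀K, by simpa [dist_eq_norm] using hr⟩,
    fun h => hx₀fr.2 (interior_mono sdiff_subset h)⟩, by linarith, ?_⟩, ?_⟩
  · rw [add_sub_cancel]
    exact eq_sub_norm_smul_of_forall_norm_sub_le (huniq x₀ hx₀fr) hx₀p hmax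
  rintro ⟨x, t⟩ ⟨⟨hx, -⟩, ht, rfl⟩
  obtain rfl : x = x₀ := by
    by_contra hne
    exact (hmax x (hfrK hx)).not_gt <| norm_sub_lt_norm_sub_of_norm_sub_lt_one (hu x hx).1 ht
      (hroll x hx x₀ hx₀K (Ne.symm hne))
  simp [norm_smul, (hu x hx).1, abs_of_nonneg (by linarith : (0 : ℝ) ≤ 1 + t)]

/-- Every nonempty disc-cap `D = K \ (int B² + p)` of a planar convex body `K` with `C²`
boundary of curvature `> 1` everywhere has a unique vertex `x₀ ∈ ∂K ∩ ∂D` and height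
`t ≥ 0` with `B² + p = B² + x₀ - (1+t)·u_{x₀}`.
The boundary is encoded by a `C²` unit-speed parametrization `γ` with curvature `κ`,
and `u` is the outer unit normal map, characterized by the supporting property. -/
theorem disc_cap_vertex_unique
    (K : Set (EuclideanSpace ℝ (Fin 2)))
    (hKcomp : IsCompact K) (hKconv : Convex ℝ K) (hKint : (interior K).Nonempty)
    (γ : ℝ → EuclideanSpace ℝ (Fin 2)) (hγ : ContDiff ℝ 2 γ)
    (hγspeed : ∀ s, ‖deriv γ s‖ = 1)
    (hγrange : frontier K = Set.range γ)
    (κ : ℝ → ℝ)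
    (hκdef : ∀ s, κ s =
      deriv γ s 0 * deriv (deriv γ) s 1 - deriv γ s 1 * deriv (deriv γ) s 0)
    (hκ : ∀ s, 1 < κ s)
    (u : EuclideanSpace ℝ (Fin 2) → EuclideanSpace ℝ (Fin 2))
    (hu : ∀ x ∈ frontier K, ‖u x‖ = 1 ∧ ∀ y ∈ K, ⟪y - x, u x⟫ ≤ 0)
    (huniq : ∀ x ∈ frontier K, ∀ v, ‖v‖ = 1 → (∀ y ∈ K, ⟪y - x, v⟫ ≤ 0) → v = u x)
    (p : EuclideanSpace ℝ (Fin 2))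
    (hD : (K \ ball p 1).Nonempty) :
    ∃! q : EuclideanSpace ℝ (Fin 2) × ℝ,
      q.1 ∈ frontier K ∩ frontier (K \ ball p 1) ∧ 0 ≤ q.2 ∧
        p = q.1 - (1 + q.2) • u q.1 :=
  disc_cap_vertex_unique_general K hKcomp γ hγ hγspeed hγrange κ hκdef hκ u hu huniq p hD
end
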